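/- arXiv:1111.0483 — 4 statements merged into one kernel-verified Lean document; each statement's English description precedes it below -/
import Mathlib

section
/- Let X be a finite set of cardinality N, let 0 ≤ k < N, and let E be an exponential family on X of dimension k (i.e. with extended tangent space T of dimension k+1). Then sup_P inf_{Q∈E} D(P‖Q) ≥ log N − log(k+1), where the supremum is over all probability distributions P on X. -/
open scoped BigOperators Classical

noncomputable section

variable {X : Type*}

/-- A probability distribution on a finite set `X`. -/
def IsProb [Fintype X] (P : X → ℝ) : Prop :=
  (∀ x, 0 ≤ P x) ∧ ∑ x, P x = 1

/-- Information divergence `D(P‖Q)` with values in `EReal`, equal to `⊤` if the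
support of `P` is not contained in the support of `Q`.  (The convention
`0 · log 0 = 0` holds automatically since `Real.log 0 = 0`.) -/
def KL [Fintype X] (P Q : X → ℝ) : EReal :=
  if ∀ x, Q x = 0 → P x = 0 then ((∑ x, P x * Real.log (P x / Q x) : ℝ) : EReal) else ⊤

/-- The exponential family with strictly positive reference measure `ν` and extended
tangent space `T` (a subspace of `ℝ^X` containing the constants): the set of strictly
positive probability distributions `P` with `log (P/ν) ∈ T`. -/
def expFam [Fintype X] (ν : X → ℝ) (T : Submodule ℝ (X → ℝ)) : Set (X → ℝ) :=
  {P | (∀ x, 0 < P x) ∧ ∑ x, P x = 1 ∧ (fun x => Real.log (P x / ν x)) ∈ T}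

/-- `sup_P inf_{Q ∈ E} D(P‖Q)`, supremum over all probability distributions `P`. -/
def maxDiv [Fintype X] (E : Set (X → ℝ)) : EReal :=
  ⨆ P ∈ {P : X → ℝ | IsProb P}, ⨅ Q ∈ E, KL P Q

/-- The orthogonal complement of `T` in `ℝ^X` w.r.t. the standard inner product
(the normal space of the exponential family with extended tangent space `T`). -/
def orthSpace [Fintype X] (T : Submodule ℝ (X → ℝ)) : Set (X → ℝ) :=
  {u | ∀ t ∈ T, ∑ x, u x * t x = 0}

/-- A circuit vector of a set `N ⊆ ℝ^X`: a nonzero element whose support is minimal,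
i.e. every `u ∈ N` with `supp u ⊆ supp v` is a scalar multiple of `v`. -/
def IsCircuitVector (N : Set (X → ℝ)) (v : X → ℝ) : Prop :=
  v ∈ N ∧ v ≠ 0 ∧ ∀ u ∈ N, Function.support u ⊆ Function.support v → ∃ α : ℝ, u = α • v

/-- A circuit of `N`: the support of a circuit vector. -/
def IsCircuit (N : Set (X → ℝ)) (σ : Set X) : Prop :=
  ∃ v, IsCircuitVector N v ∧ σ = Function.support v

/-- The closed partition model of the partition given by the equivalence relation `r`:
all probability distributions constant on each block. -/
def partModel [Fintype X] (r : X → X → Prop) : Set (X → ℝ) :=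
  {Q | IsProb Q ∧ ∀ x y, r x y → Q x = Q y}

/-- The partition exponential family of the partition given by the equivalence
relation `r`: all strictly positive probability distributions constant on each block. -/
def partExpFam [Fintype X] (r : X → X → Prop) : Set (X → ℝ) :=
  {P | (∀ x, 0 < P x) ∧ ∑ x, P x = 1 ∧ ∀ x y, r x y → P x = P y}

/-- The set `X̲` of points not annihilated by all of `N`. -/
def underlineSet (N : Set (X → ℝ)) : Set X := {x | ∃ v ∈ N, v x ≠ 0}

/-- The relation `x ∼ y` : every `v ∈ N` with `v x ≠ 0` has `v y ≠ 0`. -/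
def coRel (N : Set (X → ℝ)) (x y : X) : Prop := ∀ v ∈ N, v x ≠ 0 → v y ≠ 0

/-- `Z` is an equivalence class of `∼` on `X̲`. -/
def IsClassOf (N : Set (X → ℝ)) (Z : Set X) : Prop :=
  ∃ x ∈ underlineSet N, Z = {y | coRel N x y}

end

/-! Starting from the uniform distribution `U`, pivot along directions orthogonal to `T`: each
pivot keeps the `T`-moments, does not increase `∑ P log ν`, and removes a point of the support;
since `1 ∈ T`, every such direction has a negative entry, so the step length is bounded. This
ends at a distribution `P` supported on at most `dim T = k + 1` points. For `Q ∈ E` the function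
`log Q - log ν` lies in `T`, hence `∑ P log Q ≤ ∑ U log Q ≤ -log N` by Gibbs' inequality, while
Gibbs' inequality against the uniform distribution on the support of `P` gives
`∑ P log P ≥ -log (k + 1)`. -/

open Finset Real

section

variable {X : Type*} [Fintype X]

lemma exists_ne_zero_mem_orthSpace_of_finrank_lt (T : Submodule ℝ (X → ℝ)) (s : Finset X)
    (hs : Module.finrank ℝ T < #s) :
    ∃ d ∈ orthSpace T, d ≠ 0 ∧ ∀ x, d x ≠ 0 → x ∈ s := by
  let φ : (s → ℝ) →ₗ[ℝ] Module.Dual ℝ T :=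
    Fintype.linearCombination ℝ fun y => (LinearMap.proj (y : X)).comp T.subtype
  have hker : LinearMap.ker φ ≠ ⊥ :=
    LinearMap.ker_ne_bot_of_finrank_lt (by simpa [Subspace.dual_finrank_eq] using hs)
  obtain ⟨c, hc, hc0⟩ := Submodule.exists_mem_ne_zero_of_ne_bot hker
  refine ⟨fun x => if h : x ∈ s then c ⟨x, h⟩ else 0, fun t ht => ?_, fun h0 => hc0 ?_,
    fun x hx => ?_⟩
  · have := LinearMap.congr_fun (LinearMap.mem_ker.1 hc) ⟨t, ht⟩
    simp only [φ, Fintype.linearCombination_apply] at this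
    rw [← Finset.sum_subset (Finset.subset_univ s) (by intro x _ hx; simp [hx]),
      ← Finset.sum_attach s]
    simpa using this
  · funext y
    simpa using congrFun h0 y
  · by_contra h
    simp [h] at hx

lemma exists_nonneg_add_mul_card_support_lt (P e : X → ℝ) (hP : ∀ x, 0 ≤ P x)
    (he : ∃ x, e x < 0) (hsupp : ∀ x, e x ≠ 0 → P x ≠ 0) :
    ∃ τ : ℝ, 0 ≤ τ ∧ (∀ x, 0 ≤ P x + τ * e x) ∧
      #{x | P x + τ * e x ≠ 0} < #{x | P x ≠ 0} := by
  obtain ⟨z, hz, hzmin⟩ := Finset.exists_min_image {x | e x < 0} (fun x => P x / -e x)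
    (by simpa [Finset.Nonempty] using he)
  rw [Finset.mem_filter] at hz
  have hez : 0 < -e z := neg_pos.2 hz.2
  refine ⟨P z / -e z, div_nonneg (hP z) hez.le, fun x => ?_, Finset.card_lt_card ?_⟩
  · rcases lt_or_ge (e x) 0 with hx | hx
    · have := (le_div_iff₀ (neg_pos.2 hx)).1 (hzmin x (by simp [hx]))
      linarith
    · exact add_nonneg (hP x) (mul_nonneg (div_nonneg (hP z) hez.le) hx)
  · refine (Finset.ssubset_iff_of_subset fun x hx => ?_).2 ⟨z, ?_, ?_⟩
    · simp only [Finset.mem_filter, Finset.mem_univ, true_and] at hx ⊢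
      contrapose! hx
      have : e x = 0 := by_contra fun h => hsupp x h hx
      simp [hx, this]
    · simpa using hsupp z hz.2.ne
    · simp [div_mul_eq_mul_div, mul_div_assoc, div_neg, div_self hz.2.ne]

lemma exists_mem_orthSpace_sum_mul_nonpos (T : Submodule ℝ (X → ℝ)) (w : X → ℝ) (s : Finset X)
    (hs : Module.finrank ℝ T < #s) :
    ∃ e ∈ orthSpace T, e ≠ 0 ∧ (∀ x, e x ≠ 0 → x ∈ s) ∧ ∑ x, e x * w x ≤ 0 := by
  obtain ⟨d, hdT, hd0, hds⟩ := exists_ne_zero_mem_orthSpace_of_finrank_lt T s hs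
  rcases le_total (∑ x, d x * w x) 0 with hdw | hdw
  · exact ⟨d, hdT, hd0, hds, hdw⟩
  · refine ⟨-d, fun t ht => ?_, neg_ne_zero.2 hd0, fun x hx => hds x (by simpa using hx), ?_⟩
    · simp [Finset.sum_neg_distrib, hdT t ht]
    · simpa [Finset.sum_neg_distrib] using hdw

lemma exists_neg_of_mem_orthSpace {T : Submodule ℝ (X → ℝ)} (h1 : (fun _ => (1 : ℝ)) ∈ T)
    {e : X → ℝ} (heT : e ∈ orthSpace T) (he0 : e ≠ 0) : ∃ x, e x < 0 := by
  by_contra! h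
  exact he0 ((Fintype.sum_eq_zero_iff_of_nonneg h).1 (by simpa using heT _ h1))

lemma exists_moments_eq_card_support_lt (T : Submodule ℝ (X → ℝ))
    (h1 : (fun _ => (1 : ℝ)) ∈ T) (w P : X → ℝ) (hP : ∀ x, 0 ≤ P x)
    (hcard : Module.finrank ℝ T < #{x | P x ≠ 0}) :
    ∃ P' : X → ℝ, (∀ x, 0 ≤ P' x) ∧ (∀ t ∈ T, ∑ x, P' x * t x = ∑ x, P x * t x) ∧
      #{x | P' x ≠ 0} < #{x | P x ≠ 0} ∧ ∑ x, P' x * w x ≤ ∑ x, P x * w x := by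
  obtain ⟨e, heT, he0, hes, hew⟩ := exists_mem_orthSpace_sum_mul_nonpos T w _ hcard
  obtain ⟨τ, hτ, hP'0, hP'card⟩ := exists_nonneg_add_mul_card_support_lt P e hP
    (exists_neg_of_mem_orthSpace h1 heT he0) (fun x hx => by simpa using hes x hx)
  have hsum (t : X → ℝ) :
      ∑ x, (P x + τ * e x) * t x = ∑ x, P x * t x + τ * ∑ x, e x * t x := by
    simp only [add_mul, Finset.sum_add_distrib, Finset.mul_sum, mul_assoc]
  refine ⟨fun x => P x + τ * e x, hP'0, fun t ht => ?_, hP'card, ?_⟩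
  · rw [hsum, heT t ht, mul_zero, add_zero]
  · linarith [hsum w, mul_nonpos_of_nonneg_of_nonpos hτ hew]

theorem exists_moments_eq_card_support_le_finrank (T : Submodule ℝ (X → ℝ))
    (h1 : (fun _ => (1 : ℝ)) ∈ T) (w P : X → ℝ) (hP : ∀ x, 0 ≤ P x) :
    ∃ P' : X → ℝ, (∀ x, 0 ≤ P' x) ∧ (∀ t ∈ T, ∑ x, P' x * t x = ∑ x, P x * t x) ∧
      #{x | P' x ≠ 0} ≤ Module.finrank ℝ T ∧ ∑ x, P' x * w x ≤ ∑ x, P x * w x := by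
  induction hn : #{x | P x ≠ 0} using Nat.strong_induction_on generalizing P with
  | _ n ih =>
  by_cases hcard : #{x | P x ≠ 0} ≤ Module.finrank ℝ T
  · exact ⟨P, hP, fun _ _ => rfl, hcard, le_rfl⟩
  obtain ⟨P', hP'0, hP'T, hP'card, hP'w⟩ :=
    exists_moments_eq_card_support_lt T h1 w P hP (not_le.1 hcard)
  obtain ⟨P'', hP''0, hP''T, hP''card, hP''w⟩ := ih _ (hn ▸ hP'card) P' hP'0 rfl
  exact ⟨P'', hP''0, fun t ht => (hP''T t ht).trans (hP'T t ht), hP''card, hP''w.trans hP'w⟩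

lemma mul_log_le_mul_log_add_sub {p q : ℝ} (hp : 0 ≤ p) (hq : 0 ≤ q) (hpq : p ≠ 0 → q ≠ 0) :
    p * log q ≤ p * log p + (q - p) := by
  rcases hp.eq_or_lt with rfl | hp
  · simpa using hq
  have hq : 0 < q := hq.lt_of_ne' (hpq hp.ne')
  have := mul_le_mul_of_nonneg_left (log_le_sub_one_of_pos (div_pos hq hp)) hp.le
  rw [log_div hq.ne' hp.ne', mul_sub, mul_sub, mul_div_cancel₀ _ hp.ne', mul_one] at this
  linarith

lemma sum_mul_log_le_sum_mul_log {P Q : X → ℝ} (hP : ∀ x, 0 ≤ P x) (hQ : ∀ x, 0 ≤ Q x)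
    (hPQ : ∀ x, P x ≠ 0 → Q x ≠ 0) (hsum : ∑ x, Q x ≤ ∑ x, P x) :
    ∑ x, P x * log (Q x) ≤ ∑ x, P x * log (P x) :=
  calc ∑ x, P x * log (Q x) ≤ ∑ x, (P x * log (P x) + (Q x - P x)) :=
        Finset.sum_le_sum fun x _ => mul_log_le_mul_log_add_sub (hP x) (hQ x) (hPQ x)
    _ ≤ ∑ x, P x * log (P x) := by
        rw [Finset.sum_add_distrib, Finset.sum_sub_distrib]
        linarith

lemma card_support_pos {P : X → ℝ} (hP : IsProb P) : 0 < #{x | P x ≠ 0} := by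
  obtain ⟨x, -, hx⟩ := Finset.exists_ne_zero_of_sum_ne_zero (hP.2.symm ▸ one_ne_zero)
  exact Finset.card_pos.2 ⟨x, by simpa using hx⟩

lemma neg_log_card_support_le_sum_mul_log {P : X → ℝ} (hP : IsProb P) :
    -log (#{x | P x ≠ 0} :) ≤ ∑ x, P x * log (P x) := by
  set s : ℝ := (#{x | P x ≠ 0} :)
  let U : X → ℝ := fun x => if P x ≠ 0 then s⁻¹ else 0
  have hs : s ≠ 0 := Nat.cast_ne_zero.2 (card_support_pos hP).ne'
  have hU : ∑ x, U x = 1 := by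
    simp [U, Finset.sum_ite, s, hs]
  have hPU (x : X) : P x * log (U x) = P x * -log s := by
    by_cases hx : P x = 0 <;> simp [U, hx]
  calc -log s = ∑ x, P x * log (U x) := by simp [hPU, ← Finset.sum_mul, hP.2]
    _ ≤ ∑ x, P x * log (P x) :=
        sum_mul_log_le_sum_mul_log hP.1 (fun x => by positivity) (fun x hx => by simp [U, hx, hs])
          (by rw [hU, hP.2])

lemma sum_inv_card_mul_log_le [Nonempty X] {Q : X → ℝ} (hQ : ∀ x, 0 < Q x)
    (hQsum : ∑ x, Q x = 1) :
    ∑ x, (Fintype.card X : ℝ)⁻¹ * log (Q x) ≤ -log (Fintype.card X) := by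
  have hN : (Fintype.card X : ℝ) ≠ 0 := Nat.cast_ne_zero.2 Fintype.card_ne_zero
  calc ∑ x, (Fintype.card X : ℝ)⁻¹ * log (Q x)
      ≤ ∑ _ : X, (Fintype.card X : ℝ)⁻¹ * log (Fintype.card X : ℝ)⁻¹ :=
        sum_mul_log_le_sum_mul_log (fun _ => by positivity) (fun x => (hQ x).le)
          (fun x _ => (hQ x).ne') (by simp [hQsum, hN])
    _ = -log (Fintype.card X) := by simp [log_inv, hN]

lemma KL_eq_of_pos {P Q : X → ℝ} (hQ : ∀ x, 0 < Q x) :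
    KL P Q = ((∑ x, P x * log (P x / Q x) : ℝ) : EReal) :=
  if_pos fun x hx => absurd hx (hQ x).ne'

lemma sum_mul_log_div_eq_sub {P Q : X → ℝ} (hQ : ∀ x, 0 < Q x) :
    ∑ x, P x * log (P x / Q x) = ∑ x, P x * log (P x) - ∑ x, P x * log (Q x) := by
  rw [← Finset.sum_sub_distrib]
  refine Finset.sum_congr rfl fun x _ => ?_
  rcases eq_or_ne (P x) 0 with hx | hx
  · simp [hx]
  · rw [log_div hx (hQ x).ne', mul_sub]

lemma sum_mul_log_le_of_mem_expFam {ν : X → ℝ} (hν : ∀ x, 0 < ν x)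
    {T : Submodule ℝ (X → ℝ)} {Q : X → ℝ} (hQ : Q ∈ expFam ν T) {P R : X → ℝ}
    (hmom : ∀ t ∈ T, ∑ x, P x * t x = ∑ x, R x * t x)
    (hν_le : ∑ x, P x * log (ν x) ≤ ∑ x, R x * log (ν x)) :
    ∑ x, P x * log (Q x) ≤ ∑ x, R x * log (Q x) := by
  have hsplit (S : X → ℝ) : ∑ x, S x * log (Q x) =
      ∑ x, S x * log (ν x) + ∑ x, S x * log (Q x / ν x) := by
    rw [← Finset.sum_add_distrib]
    refine Finset.sum_congr rfl fun x _ => ?_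
    rw [log_div (hQ.1 x).ne' (hν x).ne']
    ring
  rw [hsplit P, hsplit R, hmom _ hQ.2.2]
  linarith

end

theorem stmt11_general (X : Type*) [Fintype X] [Nonempty X] (N k : ℕ)
    (hN : Fintype.card X = N)
    (ν : X → ℝ) (hν : ∀ x, 0 < ν x)
    (T : Submodule ℝ (X → ℝ)) (h1 : (fun _ => (1 : ℝ)) ∈ T)
    (hdim : Module.finrank ℝ T = k + 1) :
    ((Real.log (N : ℝ) - Real.log ((k : ℝ) + 1) : ℝ) : EReal) ≤ maxDiv (expFam ν T) := by
  subst hN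
  obtain ⟨P, hP0, hPT, hPcard, hPν⟩ := exists_moments_eq_card_support_le_finrank T h1
    (fun x => log (ν x)) (fun _ => (Fintype.card X : ℝ)⁻¹) (fun _ => by positivity)
  have hP : IsProb P := ⟨hP0, by simpa using hPT _ h1⟩
  refine le_iSup₂_of_le P hP (le_iInf₂ fun Q hQ => ?_)
  rw [KL_eq_of_pos hQ.1, EReal.coe_le_coe_iff, sum_mul_log_div_eq_sub hQ.1]
  have hsupp : log (#{x | P x ≠ 0} :) ≤ log ((k : ℝ) + 1) :=
    log_le_log (Nat.cast_pos.2 (card_support_pos hP)) (by exact_mod_cast hdim ▸ hPcard)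
  have hentropy := neg_log_card_support_le_sum_mul_log hP
  have hcross := sum_mul_log_le_of_mem_expFam hν hQ hPT hPν
  have huniform := sum_inv_card_mul_log_le hQ.1 hQ.2.1
  linarith

/-- a `k`-dimensional exponential family on `N` points has
`sup_P inf_{Q ∈ E} D(P‖Q) ≥ log N − log (k+1)`. -/
theorem stmt11 (X : Type*) [Fintype X] [Nonempty X] (N k : ℕ)
    (hN : Fintype.card X = N) (hk : k < N)
    (ν : X → ℝ) (hν : ∀ x, 0 < ν x)
    (T : Submodule ℝ (X → ℝ)) (h1 : (fun _ => (1 : ℝ)) ∈ T)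
    (hdim : Module.finrank ℝ T = k + 1) :
    ((Real.log (N : ℝ) - Real.log ((k : ℝ) + 1) : ℝ) : EReal) ≤ maxDiv (expFam ν T) :=
  stmt11_general X N k hN ν hν T h1 hdim
end

section
/- Let X be a finite set and N a linear subspace of ℝ^X. Let X̲ = {x ∈ X : v(x) ≠ 0 for some v ∈ N}, and for x, y ∈ X̲ define x ∼ y iff every v ∈ N with v(x) ≠ 0 satisfies v(y) ≠ 0 (this is an equivalence relation on X̲). Then for every equivalence class Z of ∼, the subspace { v|_Z : v ∈ N } of ℝ^Z (the image of N under restriction of functions to Z) has dimension exactly one. -/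
open scoped BigOperators Classical

/-! If `w ∈ N` does not vanish at `x`, then every `v ∈ N` agrees at `x` with a multiple of `w`,
and the difference vanishes at `x`, hence on the whole class of `x`. So on that class every
`v ∈ N` restricts to a multiple of `w`, whose restriction is nonzero. -/

section CoRel

variable {X : Type*} {N : Submodule ℝ (X → ℝ)} {w : X → ℝ} {x y : X}

/-- If `u` vanished at `x` but not at `y`, subtracting a multiple of `u` from `w` would give a
vector of `N` nonzero at `x` and zero at `y`. -/
theorem apply_eq_zero_of_coRel (hw : w ∈ N) (hwx : w x ≠ 0)
    (hxy : coRel (N : Set (X → ℝ)) x y) {u : X → ℝ} (hu : u ∈ N) (hux : u x = 0) : u y = 0 := by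
  by_contra huy
  have hmem : w - (w y / u y) • u ∈ N := N.sub_mem hw (N.smul_mem _ hu)
  refine hxy _ hmem (by simpa [hux] using hwx) ?_
  simp only [Pi.sub_apply, Pi.smul_apply, smul_eq_mul]
  field_simp
  ring

theorem apply_eq_div_mul_of_coRel (hw : w ∈ N) (hwx : w x ≠ 0)
    (hxy : coRel (N : Set (X → ℝ)) x y) {v : X → ℝ} (hv : v ∈ N) :
    v y = v x / w x * w y := by
  have hux : (v - (v x / w x) • w) x = 0 := by
    simp only [Pi.sub_apply, Pi.smul_apply, smul_eq_mul]
    field_simp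
    ring
  have huy := apply_eq_zero_of_coRel hw hwx hxy (N.sub_mem hv (N.smul_mem _ hw)) hux
  simpa [sub_eq_zero] using huy

theorem map_funLeft_eq_span_of_subset_coRel (hw : w ∈ N) (hwx : w x ≠ 0) {Z : Set X}
    (hZ : Z ⊆ {y | coRel (N : Set (X → ℝ)) x y}) :
    N.map (LinearMap.funLeft ℝ ℝ (Subtype.val : Z → X)) =
      ℝ ∙ LinearMap.funLeft ℝ ℝ (Subtype.val : Z → X) w := by
  refine le_antisymm ?_ (Submodule.span_le.mpr (Set.singleton_subset_iff.mpr ⟨w, hw, rfl⟩))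
  rintro _ ⟨v, hv, rfl⟩
  refine Submodule.mem_span_singleton.mpr ⟨v x / w x, funext fun z => ?_⟩
  simp [LinearMap.funLeft, apply_eq_div_mul_of_coRel hw hwx (hZ z.2) hv]

end CoRel

theorem stmt15_general (X : Type*) (N : Submodule ℝ (X → ℝ))
    (Z : Set X) (hZ : IsClassOf (N : Set (X → ℝ)) Z) :
    Module.finrank ℝ (N.map (LinearMap.funLeft ℝ ℝ (Subtype.val : Z → X))) = 1 := by
  obtain ⟨x, ⟨w, hw, hwx⟩, rfl⟩ := hZ
  have hxZ : x ∈ {y | coRel (N : Set (X → ℝ)) x y} := fun _ _ h => h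
  rw [map_funLeft_eq_span_of_subset_coRel hw hwx subset_rfl]
  refine finrank_span_singleton fun h => hwx ?_
  simpa [LinearMap.funLeft] using congrFun h ⟨x, hxZ⟩

/-- for every equivalence class `Z` of `∼`, the image of `N` under
restriction of functions to `Z` is one-dimensional. -/
theorem stmt15 (X : Type*) [Fintype X] (N : Submodule ℝ (X → ℝ))
    (Z : Set X) (hZ : IsClassOf (N : Set (X → ℝ)) Z) :
    Module.finrank ℝ (N.map (LinearMap.funLeft ℝ ℝ (Subtype.val : Z → X))) = 1 :=
  stmt15_general X N Z hZ
end

section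
/- Let X be a finite set and N a linear subspace of ℝ^X. Let X̲ = {x ∈ X : v(x) ≠ 0 for some v ∈ N}, and for x, y ∈ X̲ define x ∼ y iff every v ∈ N with v(x) ≠ 0 satisfies v(y) ≠ 0 (this is an equivalence relation on X̲). If the dimension of N equals the number of equivalence classes of ∼, then a subset Z ⊆ X is a circuit of N if and only if Z is an equivalence class of ∼. -/
open scoped BigOperators Classical

section Aux

theorem coRel_symm_aux {X : Type*} (N : Submodule ℝ (X → ℝ)) {x y : X}
    (hx : x ∈ underlineSet (N : Set (X → ℝ))) (h : coRel (N : Set (X → ℝ)) x y) :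
    coRel (N : Set (X → ℝ)) y x := by
  intro v hv hvy
  by_contra hvx
  obtain ⟨w, hw, hwx⟩ := hx
  have hwy : w y ≠ 0 := h w hw hwx
  have hu : (w y • v - v y • w) ∈ (N : Set (X → ℝ)) :=
    N.sub_mem (N.smul_mem _ hv) (N.smul_mem _ hw)
  have hux : (w y • v - v y • w) x ≠ 0 := by
    simp only [Pi.sub_apply, Pi.smul_apply, smul_eq_mul, hvx, mul_zero, zero_sub, neg_ne_zero]
    exact mul_ne_zero hvy hwx
  have huy := h _ hu hux
  apply huy
  simp [mul_comm]

theorem class_eq_aux {X : Type*} (N : Submodule ℝ (X → ℝ)) {x y : X}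
    (hx : x ∈ underlineSet (N : Set (X → ℝ))) (hxy : coRel (N : Set (X → ℝ)) x y) :
    {z | coRel (N : Set (X → ℝ)) x z} = {z | coRel (N : Set (X → ℝ)) y z} := by
  have hyx := coRel_symm_aux N hx hxy
  ext z
  constructor
  · intro hz v hv hvy
    exact hz v hv (hyx v hv hvy)
  · intro hz v hv hvx
    exact hz v hv (hxy v hv hvx)

end Aux

theorem stmt16 (X : Type*) [Fintype X] (N : Submodule ℝ (X → ℝ))
    (hdim : Module.finrank ℝ N = {Z : Set X | IsClassOf (N : Set (X → ℝ)) Z}.ncard) :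
    ∀ Z : Set X, IsCircuit (N : Set (X → ℝ)) Z ↔ IsClassOf (N : Set (X → ℝ)) Z := by
  classical
  set S : Set (Set X) := {Z : Set X | IsClassOf (N : Set (X → ℝ)) Z} with hSdef
  haveI : Fintype ↥S := Fintype.ofFinite _
  have hrep0 : ∀ Z : ↥S, ∃ x ∈ underlineSet (N : Set (X → ℝ)),
      (Z : Set X) = {y | coRel (N : Set (X → ℝ)) x y} := fun Z => Z.2
  choose rep hrep1 hrep2 using hrep0
  have hrepself : ∀ Z : ↥S, (Z : Set X) = {y | coRel (N : Set (X → ℝ)) (rep Z) y} := hrep2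
  let φ : N →ₗ[ℝ] (↥S → ℝ) :=
    { toFun := fun v Z => (v : X → ℝ) (rep Z)
      map_add' := fun u v => rfl
      map_smul' := fun a v => rfl }
  -- the class of a point x ∈ X̲, as an element of S
  have hclsmem : ∀ {x : X}, x ∈ underlineSet (N : Set (X → ℝ)) →
      {y | coRel (N : Set (X → ℝ)) x y} ∈ S := fun hx => ⟨_, hx, rfl⟩
  -- the representative of the class of x is co-related to x
  have hrepcls : ∀ {x : X} (hx : x ∈ underlineSet (N : Set (X → ℝ))),
      coRel (N : Set (X → ℝ)) x (rep ⟨_, hclsmem hx⟩) := by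
    intro x hx
    have : rep ⟨_, hclsmem hx⟩ ∈ ((⟨_, hclsmem hx⟩ : ↥S) : Set X) := by
      rw [hrep2 ⟨_, hclsmem hx⟩]; exact fun v _ h => h
    exact this
  have hker : ∀ w : ↥N, φ w = 0 → w = 0 := by
    intro w hw
    ext x
    by_contra hx
    have hxU : x ∈ underlineSet (N : Set (X → ℝ)) := ⟨w, w.2, hx⟩
    have : (w : X → ℝ) (rep ⟨_, hclsmem hxU⟩) ≠ 0 := hrepcls hxU w w.2 hx
    exact this (congrFun hw _)
  have hinj : Function.Injective φ := by
    intro u v huv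
    have := hker (u - v) (by rw [map_sub, huv, sub_self])
    exact sub_eq_zero.mp this
  have hfr : Module.finrank ℝ ↥N = Module.finrank ℝ (↥S → ℝ) := by
    rw [Module.finrank_pi, hdim, ← Nat.card_coe_set_eq, Nat.card_eq_fintype_card]
  have hsurj : Function.Surjective φ :=
    (LinearMap.injective_iff_surjective_of_finrank_eq_finrank hfr).mp hinj
  choose e he using fun Z : ↥S => hsurj (Pi.single Z 1)
  have heval : ∀ Z W : ↥S, (e Z : X → ℝ) (rep W) = if W = Z then 1 else 0 := by
    intro Z W
    have : φ (e Z) W = (Pi.single Z 1 : ↥S → ℝ) W := by rw [he]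
    rwa [Pi.single_apply] at this
  have hene : ∀ Z : ↥S, (e Z : X → ℝ) ≠ 0 := by
    intro Z h
    have := heval Z Z
    rw [h, if_pos rfl] at this
    exact one_ne_zero this.symm
  have hdecomp : ∀ w : ↥N, w = ∑ Z : ↥S, (w : X → ℝ) (rep Z) • e Z := by
    intro w
    apply hinj
    simp only [map_sum, map_smul, he]
    funext W
    show (w : X → ℝ) (rep W) = _
    simp [Finset.sum_apply, Pi.single_apply, mul_ite, Finset.sum_ite_eq]
  -- support of e Z is Z
  have hsupp : ∀ Z : ↥S, Function.support ((e Z : X → ℝ)) = (Z : Set X) := by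
    intro Z
    ext x
    constructor
    · intro hx
      have hxU : x ∈ underlineSet (N : Set (X → ℝ)) := ⟨e Z, (e Z).2, hx⟩
      set W : ↥S := ⟨_, hclsmem hxU⟩ with hWdef
      have h1 : (e Z : X → ℝ) (rep W) ≠ 0 := hrepcls hxU (e Z) (e Z).2 hx
      rw [heval Z W] at h1
      have hWZ : W = Z := by by_contra hne; rw [if_neg hne] at h1; exact h1 rfl
      have : x ∈ (W : Set X) := fun v _ h => h
      rwa [hWZ] at this
    · intro hx
      have hc : coRel (N : Set (X → ℝ)) (rep Z) x := by
        rw [hrep2 Z] at hx; exact hx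
      have : (e Z : X → ℝ) (rep Z) ≠ 0 := by rw [heval Z Z, if_pos rfl]; exact one_ne_zero
      exact hc (e Z) (e Z).2 this
  -- classes sharing a point are equal
  have hdisj : ∀ (W Z : ↥S) (x : X), x ∈ (W : Set X) → x ∈ (Z : Set X) → W = Z := by
    intro W Z x hxW hxZ
    rw [hrep2 W] at hxW
    rw [hrep2 Z] at hxZ
    apply Subtype.ext
    rw [hrep2 W, hrep2 Z, class_eq_aux N (hrep1 W) hxW,
      class_eq_aux N (hrep1 Z) hxZ]
  intro Z
  constructor
  · rintro ⟨v, ⟨hvN, hv0, hmin⟩, rfl⟩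
    obtain ⟨x, hx⟩ : ∃ x, v x ≠ 0 := by
      by_contra h
      push_neg at h
      exact hv0 (funext h)
    have hxU : x ∈ underlineSet (N : Set (X → ℝ)) := ⟨v, hvN, hx⟩
    set W : ↥S := ⟨_, hclsmem hxU⟩ with hWdef
    have hsub : Function.support ((e W : X → ℝ)) ⊆ Function.support v := by
      rw [hsupp W]
      intro y hy
      exact (hy : coRel (N : Set (X → ℝ)) x y) v hvN hx
    obtain ⟨α, hα⟩ := hmin (e W) (e W).2 hsub
    have hα0 : α ≠ 0 := by
      rintro rfl
      exact hene W (by rw [hα, zero_smul])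
    refine ⟨x, hxU, ?_⟩
    have : Function.support v = Function.support ((e W : X → ℝ)) := by
      rw [hα, Function.support_const_smul_of_ne_zero α v hα0]
    rw [this, hsupp W]
  · intro hZ
    set Z' : ↥S := ⟨Z, hZ⟩ with hZ'def
    refine ⟨(e Z' : X → ℝ), ⟨(e Z').2, hene Z', ?_⟩, (hsupp Z').symm⟩
    intro u hu husub
    rw [hsupp Z'] at husub
    refine ⟨(u : X → ℝ) (rep Z'), ?_⟩
    have hd := hdecomp ⟨u, hu⟩
    have hz : ∀ W : ↥S, W ≠ Z' → u (rep W) • e W = 0 := by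
      intro W hW
      have : u (rep W) = 0 := by
        by_contra h
        have h1 : rep W ∈ (Z' : Set X) := husub h
        have h2 : rep W ∈ (W : Set X) := by
          rw [hrep2 W]; exact fun v _ hh => hh
        exact hW (hdisj W Z' _ h2 h1)
      rw [this, zero_smul]
    have : (⟨u, hu⟩ : ↥N) = u (rep Z') • e Z' := by
      rw [hdecomp ⟨u, hu⟩, Finset.sum_eq_single Z' (fun W _ hW => hz W hW)
        (fun h => absurd (Finset.mem_univ Z') h)]
    have := congrArg (Subtype.val) this
    simpa using this
end

section
/- Let X be a finite set, let A : X → ℝ^h be a map (sufficient statistics), and let E be the exponential family on X with uniform reference measure and extended tangent space T equal to the linear span of the constant functions together with the coordinate functions x ↦ (A(x))_i for i = 1, …, h. Then there exists a partition X' of X such that E equals the set of strictly positive probability distributions constant on each block of X' if and only if the set {A(x) : x ∈ X} ⊆ ℝ^h is affinely independent. -/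
open scoped BigOperators Classical

/-! When `T` contains the constants, `log (exp t / ∑ exp t)` differs from `t` by a constant, so
the Gibbs distribution of `t` lies in `expFam 1 T` iff `t ∈ T`; hence `expFam 1 T` determines `T`.
A partition exponential family is the exponential family of the functions constant on the
blocks, so the question is whether every function of `A` is an affine function of `A`.
An affine relation `∑ wₐ = 0, ∑ wₐ • a = 0` among the points of `range A` is a functional
annihilating the affine functions of `A` which takes the value `wₐ` on the indicator of `A = a`;
conversely, a functional annihilating them pushes forward to an affine relation on `range A`. -/

section ExpFam

variable {X : Type*} [Fintype X]

noncomputable def gibbs (t : X → ℝ) (x : X) : ℝ := Real.exp (t x) / ∑ y, Real.exp (t y)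

lemma sum_exp_pos [Nonempty X] (t : X → ℝ) : 0 < ∑ y, Real.exp (t y) :=
  Finset.sum_pos (fun _ _ => Real.exp_pos _) Finset.univ_nonempty

lemma gibbs_pos [Nonempty X] (t : X → ℝ) (x : X) : 0 < gibbs t x :=
  div_pos (Real.exp_pos _) (sum_exp_pos t)

lemma sum_gibbs [Nonempty X] (t : X → ℝ) : ∑ x, gibbs t x = 1 := by
  simp only [gibbs, ← Finset.sum_div, div_self (sum_exp_pos t).ne']

lemma log_gibbs [Nonempty X] (t : X → ℝ) (x : X) :
    Real.log (gibbs t x) = t x - Real.log (∑ y, Real.exp (t y)) := by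
  rw [gibbs, Real.log_div (Real.exp_pos _).ne' (sum_exp_pos t).ne', Real.log_exp]

lemma gibbs_mem_expFam_iff [Nonempty X] {T : Submodule ℝ (X → ℝ)}
    (hT : (fun _ => (1 : ℝ)) ∈ T) (t : X → ℝ) :
    gibbs t ∈ expFam (fun _ => 1) T ↔ t ∈ T := by
  have hconst : (fun _ => Real.log (∑ y, Real.exp (t y))) ∈ T := by
    convert T.smul_mem (Real.log (∑ y, Real.exp (t y))) hT using 1
    funext x
    simp
  have hlog :
      (fun x => Real.log (gibbs t x / 1)) = t - fun _ => Real.log (∑ y, Real.exp (t y)) := by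
    funext x
    simp [log_gibbs]
  simp only [expFam, Set.mem_ofPred_eq, gibbs_pos, implies_true, sum_gibbs, true_and, hlog]
  exact Submodule.sub_mem_iff_left T hconst

lemma expFam_uniform_subset_iff [Nonempty X] {T T' : Submodule ℝ (X → ℝ)}
    (hT : (fun _ => (1 : ℝ)) ∈ T) (hT' : (fun _ => (1 : ℝ)) ∈ T') :
    expFam (fun _ => 1) T ⊆ expFam (fun _ => 1) T' ↔ T ≤ T' := by
  constructor
  · intro hsub t ht
    exact (gibbs_mem_expFam_iff hT' t).1 (hsub ((gibbs_mem_expFam_iff hT t).2 ht))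
  · rintro hle P ⟨hpos, hsum, hlog⟩
    exact ⟨hpos, hsum, hle hlog⟩

lemma expFam_uniform_inj [Nonempty X] {T T' : Submodule ℝ (X → ℝ)}
    (hT : (fun _ => (1 : ℝ)) ∈ T) (hT' : (fun _ => (1 : ℝ)) ∈ T') :
    expFam (fun _ => 1) T = expFam (fun _ => 1) T' ↔ T = T' := by
  simp only [subset_antisymm_iff, le_antisymm_iff, expFam_uniform_subset_iff hT hT',
    expFam_uniform_subset_iff hT' hT]

lemma mem_of_forall_mem_orthSpace {T : Submodule ℝ (X → ℝ)} {f : X → ℝ}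
    (h : ∀ u ∈ orthSpace T, ∑ x, u x * f x = 0) : f ∈ T := by
  rw [← Subspace.forall_mem_dualAnnihilator_apply_eq_zero_iff]
  intro φ hφ
  set u : X → ℝ := fun x => φ fun y => if x = y then 1 else 0
  have hφu : ∀ g, φ g = ∑ x, u x * g x := fun g => by
    rw [LinearMap.pi_apply_eq_sum_univ φ g]
    exact Finset.sum_congr rfl fun x _ => by rw [smul_eq_mul, mul_comm]
  rw [hφu]
  refine h u fun t ht => ?_
  rw [← hφu]
  exact (Submodule.mem_dualAnnihilator φ).1 hφ t ht

lemma sum_mul_comp_eq_sum_fiberwise {κ : Type*} [Fintype κ] [DecidableEq κ] (g : X → κ)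
    (u : X → ℝ) (G : κ → ℝ) :
    ∑ x, u x * G (g x) = ∑ k, (∑ x with g x = k, u x) * G k := by
  rw [← Finset.sum_fiberwise Finset.univ g]
  refine Finset.sum_congr rfl fun k _ => ?_
  rw [Finset.sum_mul]
  exact Finset.sum_congr rfl fun x hx => by rw [(Finset.mem_filter.1 hx).2]

end ExpFam

section Blocks

variable {X : Type*}

def blockConst (r : X → X → Prop) : Submodule ℝ (X → ℝ) where
  carrier := {f | ∀ x y, r x y → f x = f y}
  add_mem' hf hg x y hxy := by simp only [Pi.add_apply, hf x y hxy, hg x y hxy]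
  zero_mem' _ _ _ := rfl
  smul_mem' c _ hf x y hxy := by simp only [Pi.smul_apply, hf x y hxy]

lemma mem_blockConst {r : X → X → Prop} {f : X → ℝ} :
    f ∈ blockConst r ↔ ∀ x y, r x y → f x = f y :=
  Iff.rfl

lemma one_mem_blockConst (r : X → X → Prop) : (fun _ => (1 : ℝ)) ∈ blockConst r :=
  fun _ _ _ => rfl

lemma blockConst_anti {r s : X → X → Prop} (h : ∀ x y, r x y → s x y) :
    blockConst s ≤ blockConst r :=
  fun _ hf x y hxy => hf x y (h x y hxy)

lemma partExpFam_eq_expFam_blockConst [Fintype X] (r : X → X → Prop) :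
    partExpFam r = expFam (fun _ => 1) (blockConst r) := by
  ext P
  simp only [partExpFam, expFam, Set.mem_ofPred_eq, mem_blockConst, div_one, and_congr_right_iff]
  intro hpos _
  exact forall₃_congr fun x y _ => (Real.log_injOn_pos.eq_iff (hpos x) (hpos y)).symm

end Blocks

section Affine

variable {X ι : Type*} (A : X → ι → ℝ)

def affineFunctionsOf : Submodule ℝ (X → ℝ) :=
  Submodule.span ℝ ({fun _ => 1} ∪ Set.range (fun i x => A x i))

lemma one_mem_affineFunctionsOf : (fun _ => (1 : ℝ)) ∈ affineFunctionsOf A :=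
  Submodule.subset_span (Or.inl rfl)

lemma coord_mem_affineFunctionsOf (i : ι) : (fun x => A x i) ∈ affineFunctionsOf A :=
  Submodule.subset_span (Or.inr ⟨i, rfl⟩)

lemma affineFunctionsOf_le_blockConst :
    affineFunctionsOf A ≤ blockConst (fun x y => A x = A y) := by
  rw [affineFunctionsOf, Submodule.span_le]
  rintro f (rfl | ⟨i, rfl⟩) x y hxy
  · rfl
  · exact congrFun hxy i

lemma affineIndependent_of_blockConst_le
    (h : blockConst (fun x y => A x = A y) ≤ affineFunctionsOf A) :
    AffineIndependent ℝ (fun p : Set.range A => (p : ι → ℝ)) := by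
  rw [affineIndependent_iff]
  intro s w hw0 hw1 i hi
  let φ : (X → ℝ) →ₗ[ℝ] ℝ :=
    ∑ e ∈ s, w e • LinearMap.proj (Set.rangeSplitting A e)
  have hφ : ∀ f, φ f = ∑ e ∈ s, w e * f (Set.rangeSplitting A e) := fun f => by simp [φ]
  have hsplit : ∀ e j, A (Set.rangeSplitting A e) j = (e : ι → ℝ) j :=
    fun e => congrFun (Set.apply_rangeSplitting A e)
  have hker : affineFunctionsOf A ≤ LinearMap.ker φ := by
    rw [affineFunctionsOf, Submodule.span_le]
    rintro f (rfl | ⟨j, rfl⟩)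
    · simpa [hφ] using hw0
    · simpa [hφ, hsplit, Finset.sum_apply] using congrFun hw1 j
  have hδ : (fun x => if A x = i then (1 : ℝ) else 0) ∈ blockConst (fun x y => A x = A y) := by
    intro x y hxy
    simp only [hxy]
  have hφδ : φ _ = 0 := hker (h hδ)
  simpa [hφ, Set.apply_rangeSplitting, ← Subtype.ext_iff, Finset.sum_ite_eq', hi] using hφδ

lemma blockConst_le_of_affineIndependent [Fintype X]
    (hA : AffineIndependent ℝ (fun p : Set.range A => (p : ι → ℝ))) :
    blockConst (fun x y => A x = A y) ≤ affineFunctionsOf A := by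
  intro f hf
  refine mem_of_forall_mem_orthSpace fun u hu => ?_
  set v : Set.range A → ℝ := fun a => ∑ x with Set.rangeFactorization A x = a, u x
  have hv : ∀ G : Set.range A → ℝ,
      ∑ x, u x * G (Set.rangeFactorization A x) = ∑ a, v a * G a :=
    sum_mul_comp_eq_sum_fiberwise _ u
  have hv0 : ∑ a, v a = 0 := by
    simpa using (hv fun _ => 1).symm.trans (hu _ (one_mem_affineFunctionsOf A))
  have hv1 : ∑ a, v a • (a : ι → ℝ) = 0 := by
    funext j
    simpa [Finset.sum_apply] using
      (hv fun a => a.1 j).symm.trans (hu _ (coord_mem_affineFunctionsOf A j))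
  have hf' : ∀ x, f (Set.rangeSplitting A (Set.rangeFactorization A x)) = f x :=
    fun x => (hf _ _ (Set.apply_rangeSplitting A (Set.rangeFactorization A x)).symm).symm
  calc ∑ x, u x * f x
      = ∑ x, u x * f (Set.rangeSplitting A (Set.rangeFactorization A x)) := by simp only [hf']
    _ = ∑ a, v a * f (Set.rangeSplitting A a) := hv (f ∘ Set.rangeSplitting A)
    _ = 0 := Finset.sum_eq_zero fun a _ => by
      rw [hA.eq_zero_of_sum_eq_zero hv0 hv1 a (Finset.mem_univ a), zero_mul]

theorem exists_affineFunctionsOf_eq_blockConst_iff [Fintype X] :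
    (∃ r : X → X → Prop, Equivalence r ∧ affineFunctionsOf A = blockConst r) ↔
      AffineIndependent ℝ (fun p : Set.range A => (p : ι → ℝ)) := by
  constructor
  · rintro ⟨r, -, hr⟩
    have hrA : ∀ x y, r x y → A x = A y := fun x y hxy =>
      funext fun i => (hr ▸ coord_mem_affineFunctionsOf A i : _ ∈ blockConst r) x y hxy
    exact affineIndependent_of_blockConst_le A (hr ▸ blockConst_anti hrA)
  · intro hA
    exact ⟨fun x y => A x = A y, ⟨fun _ => rfl, Eq.symm, Eq.trans⟩,
      le_antisymm (affineFunctionsOf_le_blockConst A) (blockConst_le_of_affineIndependent A hA)⟩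

end Affine

/-- an exponential family with uniform reference measure and extended
tangent space spanned by the constants and the coordinate functions of a sufficient
statistics `A : X → ℝ^h` is a partition exponential family iff the set
`{A x : x ∈ X}` is affinely independent. -/
theorem stmt19 (X : Type*) [Fintype X] [Nonempty X] (h : ℕ) (A : X → Fin h → ℝ)
    (T : Submodule ℝ (X → ℝ))
    (hT : T = Submodule.span ℝ
      ({fun _ => (1 : ℝ)} ∪ Set.range (fun i : Fin h => fun x : X => A x i))) :
    (∃ r : X → X → Prop, Equivalence r ∧ expFam (fun _ => 1) T = partExpFam r) ↔
      AffineIndependent ℝ (fun p : Set.range A => (p : Fin h → ℝ)) := by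
  rw [show T = affineFunctionsOf A from hT]
  simp_rw [partExpFam_eq_expFam_blockConst,
    expFam_uniform_inj (one_mem_affineFunctionsOf A) (one_mem_blockConst _)]
  exact exists_affineFunctionsOf_eq_blockConst_iff A
end
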